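/- Convergence rate O(1/T^{1/2−δ}) in the non-convex case (Remark 1, second bullet). Suppose F is L-smooth and bounded below by F_inf, the bounded-heterogeneity condition with parameter θ holds along all iterates, every Byzantine upload is a nonzero vector, (2 − θ²/2)·C_α − 1 > 0, and the step sizes are η^t = η/(t+1)^{1/2+δ} with η > 0 and δ ∈ (0, 1/2). Then there exists a constant C > 0 (depending only on F(w^0) − F_inf, L, η, δ, θ, and C_α) such that for every T ≥ 1, (1/Σ_{t=0}^{T−1} η^t)·Σ_{t=0}^{T−1} η^t ‖∇F(w^t)‖ ≤ C / T^{1/2 − δ}. -/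

import Mathlib

open Finset NormedSpace
open scoped InnerProductSpace

/-!
Normalising every upload makes the aggregated direction `u` a convex combination of vectors of
norm at most one, so `‖u‖ ≤ 1`. An honest unit vector within `θ` of the direction of `∇F` makes
an inner product at least `(1 - θ²/2)‖∇F‖` with `∇F`, and a Byzantine one at least `-‖∇F‖`, so
`⟪∇F, u⟫ ≥ κ‖∇F‖` with `κ = (2 - θ²/2)C_α - 1 > 0`. Smoothness then gives the descent inequality
`κ η_t ‖∇F(w^t)‖ ≤ F(w^t) - F(w^{t+1}) + (L⁺/2) η_t²` with `L⁺ = max L 0`. Summing, the left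
side is bounded by `F(w^0) - F_inf + (L⁺/2) Σ η_t²`, which is finite since `η_t² ~ t^{-1-2δ}`,
while `Σ_{t<T} η_t ≥ η T^{1/2-δ}`.
-/

section

variable {E : Type*} [NormedAddCommGroup E] [InnerProductSpace ℝ E]

lemma norm_normalize_le_one (x : E) : ‖normalize x‖ ≤ 1 := by
  rcases eq_or_ne x 0 with rfl | hx
  · simp
  · exact (norm_normalize_eq_one_iff.2 hx).le

lemma norm_sum_smul_le_one {ι : Type*} [Fintype ι] {α : ι → ℝ} (hα : ∀ m, 0 ≤ α m)
    (hαsum : ∑ m, α m = 1) {v : ι → E} (hv : ∀ m, ‖v m‖ ≤ 1) :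
    ‖∑ m, α m • v m‖ ≤ 1 := by
  simpa using (convex_closedBall (0 : E) 1).sum_mem (fun m _ => hα m) hαsum
    fun m _ => mem_closedBall_zero_iff.2 (hv m)

lemma mul_norm_le_inner_of_norm_sub_normalize_le {a y : E} {θ : ℝ} (hy : ‖y‖ = 1)
    (hθ : ‖y - normalize a‖ ≤ θ) : (1 - θ ^ 2 / 2) * ‖a‖ ≤ ⟪a, y⟫_ℝ := by
  rcases eq_or_ne a 0 with rfl | ha
  · simp
  have hcos : 1 - θ ^ 2 / 2 ≤ ⟪normalize a, y⟫_ℝ := by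
    have hsq := norm_sub_sq_real y (normalize a)
    rw [hy, norm_normalize_eq_one_iff.2 ha, real_inner_comm] at hsq
    nlinarith [pow_le_pow_left₀ (norm_nonneg _) hθ 2]
  calc (1 - θ ^ 2 / 2) * ‖a‖ ≤ ‖a‖ * ⟪normalize a, y⟫_ℝ := by nlinarith [norm_nonneg a]
    _ = ⟪a, y⟫_ℝ := by rw [← real_inner_smul_left, norm_smul_normalize]

lemma mul_norm_le_inner_sum_smul {ι : Type*} [Fintype ι] [DecidableEq ι] {α : ι → ℝ}
    (hα : ∀ m, 0 ≤ α m) (hαsum : ∑ m, α m = 1) (B : Finset ι) {a : E} {v : ι → E} {c : ℝ}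
    (hv : ∀ m, ‖v m‖ ≤ 1) (hgood : ∀ m ∉ B, c * ‖a‖ ≤ ⟪a, v m⟫_ℝ) :
    ((1 + c) * ∑ m ∈ Bᶜ, α m - 1) * ‖a‖ ≤ ⟪a, ∑ m, α m • v m⟫_ℝ := by
  have hB : ∑ m ∈ B, α m = 1 - ∑ m ∈ Bᶜ, α m := by
    rw [← hαsum, ← sum_compl_add_sum B]; ring
  have hhonest : ∑ m ∈ Bᶜ, α m * (c * ‖a‖) ≤ ∑ m ∈ Bᶜ, α m * ⟪a, v m⟫_ℝ :=
    sum_le_sum fun m hm => mul_le_mul_of_nonneg_left (hgood m (mem_compl.1 hm)) (hα m)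
  have hbyz : ∑ m ∈ B, α m * (-‖a‖) ≤ ∑ m ∈ B, α m * ⟪a, v m⟫_ℝ := by
    refine sum_le_sum fun m _ => mul_le_mul_of_nonneg_left ?_ (hα m)
    nlinarith [neg_le_of_abs_le (abs_real_inner_le_norm a (v m)), hv m, norm_nonneg a]
  rw [← sum_mul, hB] at hbyz
  rw [← sum_mul] at hhonest
  rw [inner_sum, ← sum_compl_add_sum B]
  simp only [real_inner_smul_right]
  linarith

lemma mul_norm_le_inner_sum_smul_normalize {ι : Type*} [Fintype ι] [DecidableEq ι]
    {α : ι → ℝ} (hα : ∀ m, 0 ≤ α m) (hαsum : ∑ m, α m = 1) (B : Finset ι) {a : E} {g : ι → E}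
    {θ : ℝ} (hg : ∀ m ∉ B, g m ≠ 0) (hθ : ∀ m ∉ B, ‖normalize (g m) - normalize a‖ ≤ θ) :
    ((2 - θ ^ 2 / 2) * ∑ m ∈ Bᶜ, α m - 1) * ‖a‖ ≤ ⟪a, ∑ m, α m • normalize (g m)⟫_ℝ := by
  have h := mul_norm_le_inner_sum_smul hα hαsum B (fun m => norm_normalize_le_one (g m))
    fun m hm => mul_norm_le_inner_of_norm_sub_normalize_le
      (norm_normalize_eq_one_iff.2 (hg m hm)) (hθ m hm)
  rwa [show 1 + (1 - θ ^ 2 / 2) = 2 - θ ^ 2 / 2 by ring] at h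

lemma sufficient_decrease_of_smooth {F : E → ℝ} {gradF : E → E} {L : ℝ}
    (hsmooth : ∀ w1 w2 : E, F w1 - F w2 ≤ ⟪gradF w2, w1 - w2⟫_ℝ + L / 2 * ‖w1 - w2‖ ^ 2)
    {w u : E} {κ η : ℝ} (hη : 0 ≤ η) (hu : ‖u‖ ≤ 1) (hκ : κ * ‖gradF w‖ ≤ ⟪gradF w, u⟫_ℝ) :
    κ * (η * ‖gradF w‖) ≤ F w - F (w - η • u) + max L 0 / 2 * η ^ 2 := by
  have hs := hsmooth (w - η • u) w
  rw [sub_sub_cancel_left, inner_neg_right, real_inner_smul_right, norm_neg, norm_smul,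
    Real.norm_eq_abs, abs_of_nonneg hη] at hs
  have hquad : L / 2 * (η * ‖u‖) ^ 2 ≤ max L 0 / 2 * η ^ 2 :=
    calc L / 2 * (η * ‖u‖) ^ 2 ≤ max L 0 / 2 * (η * ‖u‖) ^ 2 := by gcongr; exact le_max_left L 0
      _ ≤ max L 0 / 2 * η ^ 2 := by
        have : 0 ≤ max L 0 := le_max_right L 0
        gcongr
        exact mul_le_of_le_one_right hη hu
  nlinarith [mul_le_mul_of_nonneg_left hκ hη]

end

lemma mul_sum_le_of_le_sub_succ {f a b : ℕ → ℝ} {κ c finf : ℝ} (hf : ∀ t, finf ≤ f t)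
    (h : ∀ t, κ * a t ≤ f t - f (t + 1) + c * b t) (T : ℕ) :
    κ * ∑ t ∈ range T, a t ≤ f 0 - finf + c * ∑ t ∈ range T, b t := by
  have hsum := sum_le_sum fun t (_ : t ∈ range T) => h t
  rw [← mul_sum, sum_add_distrib, sum_range_sub', ← mul_sum] at hsum
  linarith [hf T]

lemma summable_sq_div_rpow (c : ℝ) {p : ℝ} (hp : 1 / 2 < p) :
    Summable fun t : ℕ => (c / ((t : ℝ) + 1) ^ p) ^ 2 := by
  have hsum : Summable fun t : ℕ => 1 / |(t : ℝ) + 1| ^ (p * 2) :=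
    (Real.summable_one_div_nat_add_rpow 1 (p * 2)).2 (by linarith)
  refine (hsum.mul_left (c ^ 2)).congr fun t => ?_
  have ht : (0 : ℝ) ≤ (t : ℝ) + 1 := by positivity
  rw [abs_of_nonneg ht, Real.rpow_mul ht, Real.rpow_two, div_pow]
  ring

lemma mul_rpow_le_sum_div_rpow {c p : ℝ} (hc : 0 ≤ c) (hp : 0 ≤ p) {T : ℕ} (hT : 1 ≤ T) :
    c * (T : ℝ) ^ (1 - p) ≤ ∑ t ∈ range T, c / ((t : ℝ) + 1) ^ p := by
  have hT0 : (0 : ℝ) < T := by exact_mod_cast hT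
  have hterm : ∀ t ∈ range T, c / (T : ℝ) ^ p ≤ c / ((t : ℝ) + 1) ^ p := fun t ht => by
    have htT : (t : ℝ) + 1 ≤ T := by exact_mod_cast mem_range.1 ht
    gcongr
  calc c * (T : ℝ) ^ (1 - p) = (range T).card • (c / (T : ℝ) ^ p) := by
        rw [card_range, nsmul_eq_mul, Real.rpow_sub hT0, Real.rpow_one]; ring
    _ ≤ _ := card_nsmul_le_sum _ _ _ hterm

lemma one_div_mul_le_of_mul_le {A G D κ c τ : ℝ} (hκ : 0 < κ) (hc : 0 < c) (hτ : 0 < τ)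
    (hD : 0 ≤ D) (hA : c * τ ≤ A) (hG : κ * G ≤ D) : 1 / A * G ≤ D / (κ * c) / τ := by
  have hA0 : 0 < A := (mul_pos hc hτ).trans_le hA
  rw [one_div_mul_eq_div, div_le_div_iff₀ hA0 hτ]
  calc G * τ ≤ D / κ * τ := by gcongr; rwa [le_div_iff₀' hκ]
    _ = D / (κ * c) * (c * τ) := by field_simp
    _ ≤ D / (κ * c) * A := by gcongr

theorem fedNGA_nonconvex_rate_general
    {E : Type*} [NormedAddCommGroup E] [InnerProductSpace ℝ E]
    {ι : Type*} [Fintype ι] [DecidableEq ι]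
    (α : ι → ℝ) (hαpos : ∀ m, 0 < α m) (hαsum : ∑ m, α m = 1)
    (gradFm : ι → E → E)
    (F : E → ℝ)
    (gradF : E → E)
    (B : Finset ι) (Cα : ℝ) (hCα : Cα = ∑ m ∈ Bᶜ, α m)
    (L θ : ℝ)
    (hsmooth : ∀ w1 w2 : E, F w1 - F w2 ≤ ⟪gradF w2, w1 - w2⟫_ℝ + L / 2 * ‖w1 - w2‖ ^ 2)
    (Finf : ℝ) (hFinf : ∀ w : E, Finf ≤ F w)
    -- diminishing step sizes η^t = η / (t+1)^{1/2+δ}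
    (ηc δ : ℝ) (hηc : 0 < ηc) (hδ : δ ∈ Set.Ioo (0 : ℝ) (1 / 2))
    (η : ℕ → ℝ) (hη : ∀ t, η t = ηc / ((t : ℝ) + 1) ^ ((1 : ℝ) / 2 + δ))
    -- Fed-NGA iterates
    (w : ℕ → E) (g : ι → ℕ → E)
    (hg_honest : ∀ m ∉ B, ∀ t, g m t = gradFm m (w t))
    (hupdate : ∀ t, w (t + 1) = w t - η t • ∑ m, α m • (‖g m t‖⁻¹ • g m t))
    -- bounded heterogeneity along the iterates
    (hgradm_ne : ∀ t, ∀ m ∉ B, gradFm m (w t) ≠ 0)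
    (hhet : ∀ t, ∀ m ∉ B,
      ‖‖gradFm m (w t)‖⁻¹ • gradFm m (w t) - ‖gradF (w t)‖⁻¹ • gradF (w t)‖ ≤ θ)
    (hcond : (2 - θ ^ 2 / 2) * Cα - 1 > 0) :
    ∃ C > 0, ∀ T : ℕ, 1 ≤ T →
      (1 / ∑ t ∈ range T, η t) * ∑ t ∈ range T, η t * ‖gradF (w t)‖ ≤
        C / (T : ℝ) ^ ((1 : ℝ) / 2 - δ) := by
  obtain ⟨hδ0, -⟩ := hδ
  set κ := (2 - θ ^ 2 / 2) * Cα - 1 with hκ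
  have hηpos : ∀ t, 0 < η t := fun t => by rw [hη]; positivity
  have hdir : ∀ t, ‖∑ m, α m • normalize (g m t)‖ ≤ 1 := fun t =>
    norm_sum_smul_le_one (fun m => (hαpos m).le) hαsum fun m => norm_normalize_le_one _
  have hcorr : ∀ t, κ * ‖gradF (w t)‖ ≤ ⟪gradF (w t), ∑ m, α m • normalize (g m t)⟫_ℝ := by
    intro t
    rw [hκ, hCα]
    exact mul_norm_le_inner_sum_smul_normalize (fun m => (hαpos m).le) hαsum B
      (fun m hm => hg_honest m hm t ▸ hgradm_ne t m hm) fun m hm => hg_honest m hm t ▸ hhet t m hm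
  have hdesc : ∀ t, κ * (η t * ‖gradF (w t)‖) ≤
      F (w t) - F (w (t + 1)) + max L 0 / 2 * η t ^ 2 := fun t => by
    rw [hupdate t]
    exact sufficient_decrease_of_smooth hsmooth (hηpos t).le (hdir t) (hcorr t)
  have hsq : Summable fun t => η t ^ 2 := by
    simpa only [hη] using summable_sq_div_rpow ηc (p := 1 / 2 + δ) (by linarith)
  set D := F (w 0) - Finf + max L 0 / 2 * ∑' t, η t ^ 2 + 1 with hDdef
  have hD : 0 < D := by
    linarith [hFinf (w 0), show 0 ≤ max L 0 / 2 * ∑' t, η t ^ 2 by positivity]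
  refine ⟨D / (κ * ηc), by positivity, fun T hT => ?_⟩
  have hG : κ * ∑ t ∈ range T, η t * ‖gradF (w t)‖ ≤ D := by
    refine (mul_sum_le_of_le_sub_succ (fun t => hFinf (w t)) hdesc T).trans ?_
    have hL : 0 ≤ max L 0 / 2 := by positivity
    have := mul_le_mul_of_nonneg_left (hsq.sum_le_tsum (range T) fun t _ => sq_nonneg (η t)) hL
    linarith
  have hA : ηc * (T : ℝ) ^ ((1 : ℝ) / 2 - δ) ≤ ∑ t ∈ range T, η t := by
    simpa only [hη, show (1 : ℝ) / 2 - δ = 1 - (1 / 2 + δ) by ring] using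
      mul_rpow_le_sum_div_rpow hηc.le (p := 1 / 2 + δ) (by linarith) hT
  exact one_div_mul_le_of_mul_le hcond hηc (by positivity) hD.le hA hG

/-- Convergence rate O(1/T^{1/2−δ}) in the non-convex case (Remark 1, second bullet). -/
theorem fedNGA_nonconvex_rate
    {E : Type*} [NormedAddCommGroup E] [InnerProductSpace ℝ E]
    {ι : Type*} [Fintype ι] [DecidableEq ι]
    (α : ι → ℝ) (hαpos : ∀ m, 0 < α m) (hαsum : ∑ m, α m = 1)
    (Fm : ι → E → ℝ) (gradFm : ι → E → E)
    (F : E → ℝ) (hF : ∀ w, F w = ∑ m, α m * Fm m w)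
    (gradF : E → E) (hgradF : ∀ w, gradF w = ∑ m, α m • gradFm m w)
    (B : Finset ι) (Cα : ℝ) (hCα : Cα = ∑ m ∈ Bᶜ, α m)
    (L θ : ℝ)
    (hsmooth : ∀ w1 w2 : E, F w1 - F w2 ≤ ⟪gradF w2, w1 - w2⟫_ℝ + L / 2 * ‖w1 - w2‖ ^ 2)
    (Finf : ℝ) (hFinf : ∀ w : E, Finf ≤ F w)
    -- diminishing step sizes η^t = η / (t+1)^{1/2+δ}
    (ηc δ : ℝ) (hηc : 0 < ηc) (hδ : δ ∈ Set.Ioo (0 : ℝ) (1 / 2))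
    (η : ℕ → ℝ) (hη : ∀ t, η t = ηc / ((t : ℝ) + 1) ^ ((1 : ℝ) / 2 + δ))
    -- Fed-NGA iterates
    (w : ℕ → E) (g : ι → ℕ → E)
    (hg_honest : ∀ m ∉ B, ∀ t, g m t = gradFm m (w t))
    (hg_byz : ∀ m ∈ B, ∀ t, g m t ≠ 0)
    (hupdate : ∀ t, w (t + 1) = w t - η t • ∑ m, α m • (‖g m t‖⁻¹ • g m t))
    -- bounded heterogeneity along the iterates
    (hgrad_ne : ∀ t, gradF (w t) ≠ 0)
    (hgradm_ne : ∀ t, ∀ m ∉ B, gradFm m (w t) ≠ 0)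
    (hhet : ∀ t, ∀ m ∉ B,
      ‖‖gradFm m (w t)‖⁻¹ • gradFm m (w t) - ‖gradF (w t)‖⁻¹ • gradF (w t)‖ ≤ θ)
    (hcond : (2 - θ ^ 2 / 2) * Cα - 1 > 0) :
    ∃ C > 0, ∀ T : ℕ, 1 ≤ T →
      (1 / ∑ t ∈ range T, η t) * ∑ t ∈ range T, η t * ‖gradF (w t)‖ ≤
        C / (T : ℝ) ^ ((1 : ℝ) / 2 - δ) :=
  fedNGA_nonconvex_rate_general α hαpos hαsum gradFm F gradF B Cα hCα L θ hsmooth Finf hFinf ηc δ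
    hηc hδ η hη w g hg_honest hupdate hgradm_ne hhet hcond
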